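/- Let X, Y, Z be random variables taking values in [0,1]^d, [0,1], and [0,1]^{d'} respectively, with X and Y conditionally independent given Z (the null hypothesis H₀). Let 𝒫_n, 𝒬_n, 𝓡_n be finite cubic partitions of [0,1]^d, [0,1], [0,1]^{d'} into cubes of common side length h_n. Suppose the conditional distribution P_{X|Z=z} has density p(·|z) with respect to P_X and, with C_n(z) denoting the cell of 𝓡_n containing z, Condition 1 holds: ∫∫ |p(x|z) − (∫_{C_n(z)} p(x|z') P_Z(dz')) / P_Z(C_n(z))| P_X(dx) P_Z(dz) ≤ C* h_n. Then the deterministic approximation error satisfies Σ_{A ∈ 𝒫_n, B ∈ 𝒬_n, C ∈ 𝓡_n} |P_{XYZ}(A × B × C) − P_{XZ}(A × C) · P_{YZ}(B × C) / P_Z(C)| ≤ C* h_n (with the convention that terms with P_Z(C) = 0 vanish). -/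

import Mathlib

open MeasureTheory ProbabilityTheory Real
open scoped ENNReal

/-- The cube of side `h` of the grid `h·ℤ^d` indexed by `k ∈ ℤ^d`:
`∏_i [k_i h, (k_i+1) h)`. -/
def cellPi (d : ℕ) (h : ℝ) (k : Fin d → ℤ) : Set (Fin d → ℝ) :=
  {x | ∀ i, (k i : ℝ) * h ≤ x i ∧ x i < ((k i : ℝ) + 1) * h}

/-- The interval `[k h, (k+1) h)` of the grid of side `h` on `ℝ`. -/
def cell1 (h : ℝ) (k : ℤ) : Set ℝ := Set.Ico ((k : ℝ) * h) (((k : ℝ) + 1) * h)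

/-- `C_n(z)`: the grid cell of side `h` containing `z`. -/
noncomputable def cellOf (d' : ℕ) (h : ℝ) (z : Fin d' → ℝ) : Set (Fin d' → ℝ) :=
  cellPi d' h (fun i => ⌊z i / h⌋)

/-!
Write `κ`, `η` for the conditional laws of `X` and `Y` given `Z`, `ν = P_Z` and `ρ = P_X`.
Conditional independence gives `P(X ∈ A, Y ∈ B, Z ∈ C) = ∫_C κ_z(A) η_z(B) dν`, so each summand
equals `|∫_C (κ_z(A) - ⨍_C κ(A)) η_z(B) dν|`. The masses `η_z(B)` of disjoint cells add up to at
most one, and `κ_z(A) - ⨍_C κ(A) = ∫_A (p(x|z) - ⨍_C p(x|·)) dρ`, so summing over `A` and `B`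
leaves `∫_C ∫ |p(x|z) - ⨍_C p(x|·)| dρ dν` for each cell `C`; summing over `C` gives the
left-hand side of Condition 1.
-/

open Set Finset Function

lemma cellPi_eq_pi (d : ℕ) (h : ℝ) (k : Fin d → ℤ) :
    cellPi d h k = Set.univ.pi fun i => cell1 h (k i) := by
  ext x; simp [cellPi, cell1]

lemma measurableSet_cellPi (d : ℕ) (h : ℝ) (k : Fin d → ℤ) : MeasurableSet (cellPi d h k) := by
  rw [cellPi_eq_pi]; exact MeasurableSet.univ_pi fun _ => measurableSet_Ico

lemma pairwise_disjoint_cell1 (h : ℝ) : Pairwise (Disjoint on cell1 h) := by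
  have hcell : cell1 h = fun n : ℤ => Ico (0 + n • h) (0 + (n + 1) • h) := by
    funext n; simp [cell1, zsmul_eq_mul]
  rw [hcell]
  exact pairwise_disjoint_Ico_add_zsmul 0 h

lemma pairwise_disjoint_cellPi (d : ℕ) (h : ℝ) : Pairwise (Disjoint on cellPi d h) := by
  intro k k' hkk'
  obtain ⟨i, hi⟩ := ne_iff.mp hkk'
  simp only [onFun, cellPi_eq_pi, Set.disjoint_univ_pi]
  exact ⟨i, pairwise_disjoint_cell1 h hi⟩

lemma cellOf_eq_of_mem_cellPi {d : ℕ} {h : ℝ} (hh : 0 < h) {k : Fin d → ℤ} {z : Fin d → ℝ}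
    (hz : z ∈ cellPi d h k) : cellOf d h z = cellPi d h k := by
  rw [cellOf]
  congr 1
  funext i
  rw [Int.floor_eq_iff, le_div_iff₀ hh, div_lt_iff₀ hh]
  exact hz i

lemma tsum_le_of_sum_sum_sum_le {α β γ : Type*} {f : α × β × γ → ℝ} {M : ℝ}
    (hf : ∀ k, 0 ≤ f k)
    (h : ∀ (sA : Finset α) (sB : Finset β) (sC : Finset γ),
      ∑ c ∈ sC, ∑ a ∈ sA, ∑ b ∈ sB, f (a, b, c) ≤ M) :
    ∑' k, f k ≤ M := by
  classical
  refine tsum_le_of_sum_le' (by simpa using h ∅ ∅ ∅) fun s => ?_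
  have hs : s ⊆ s.image Prod.fst ×ˢ s.image (Prod.fst ∘ Prod.snd) ×ˢ
      s.image (Prod.snd ∘ Prod.snd) := by
    intro k hk
    simp only [mem_product]
    exact ⟨mem_image_of_mem _ hk, mem_image_of_mem _ hk, mem_image_of_mem _ hk⟩
  refine (sum_le_sum_of_subset_of_nonneg hs fun k _ _ => hf k).trans ?_
  simp_rw [sum_product]
  refine (sum_congr rfl fun a _ => sum_comm).trans_le ?_
  rw [sum_comm]
  exact h _ _ _

namespace MeasureTheory

variable {α : Type*} [MeasurableSpace α] {μ : Measure α}

lemma sum_setIntegral_le_integral {ι : Type*} {f : α → ℝ} (hf : Integrable f μ)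
    (hf0 : 0 ≤ᵐ[μ] f) (s : Finset ι) {S : ι → Set α} (hS : ∀ i ∈ s, MeasurableSet (S i))
    (hSd : (s : Set ι).PairwiseDisjoint S) :
    ∑ i ∈ s, ∫ x in S i, f x ∂μ ≤ ∫ x, f x ∂μ := by
  rw [← integral_biUnion_finset s hS hSd fun i _ => hf.integrableOn]
  exact setIntegral_le_integral hf hf0

lemma sum_measureReal_le_one [IsProbabilityMeasure μ] {ι : Type*} (s : Finset ι)
    {S : ι → Set α} (hS : ∀ i ∈ s, MeasurableSet (S i)) (hSd : (s : Set ι).PairwiseDisjoint S) :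
    ∑ i ∈ s, μ.real (S i) ≤ 1 := by
  rw [← measureReal_biUnion_finset hSd hS]
  exact measureReal_le_one

lemma setIntegral_sub_setAverage_mul {F G : α → ℝ} {C : Set α}
    (hFG : IntegrableOn (fun z => F z * G z) C μ) (hG : IntegrableOn G C μ) :
    ∫ z in C, (F z - ⨍ z' in C, F z' ∂μ) * G z ∂μ
      = ∫ z in C, F z * G z ∂μ - (∫ z in C, F z ∂μ) * (∫ z in C, G z ∂μ) / μ.real C := by
  simp_rw [sub_mul]
  rw [integral_sub hFG (hG.const_mul _), integral_const_mul, setAverage_eq, smul_eq_mul]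
  ring

lemma sum_abs_integral_mul_le_integral_abs {ι : Type*} (s : Finset ι) {H : α → ℝ}
    (hH : Integrable H μ) {G : ι → α → ℝ} (hGm : ∀ i ∈ s, AEStronglyMeasurable (G i) μ)
    (hG0 : ∀ i ∈ s, ∀ z, 0 ≤ G i z) (hG1 : ∀ z, ∑ i ∈ s, G i z ≤ 1) :
    ∑ i ∈ s, |∫ z, H z * G i z ∂μ| ≤ ∫ z, |H z| ∂μ := by
  have hint : ∀ i ∈ s, Integrable (fun z => |H z| * G i z) μ := fun i hi =>
    hH.abs.mul_bdd (hGm i hi) <| ae_of_all _ fun z => by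
      rw [Real.norm_of_nonneg (hG0 i hi z)]
      exact (single_le_sum (fun j hj => hG0 j hj z) hi).trans (hG1 z)
  calc ∑ i ∈ s, |∫ z, H z * G i z ∂μ| ≤ ∑ i ∈ s, ∫ z, |H z| * G i z ∂μ := by
        refine sum_le_sum fun i hi => abs_integral_le_integral_abs.trans_eq ?_
        simp_rw [abs_mul, abs_of_nonneg (hG0 i hi _)]
    _ = ∫ z, |H z| * ∑ i ∈ s, G i z ∂μ := by
        simp_rw [mul_sum]
        exact (integral_finsetSum s hint).symm
    _ ≤ ∫ z, |H z| ∂μ :=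
        integral_mono_of_nonneg
          (ae_of_all _ fun z => mul_nonneg (abs_nonneg _) (sum_nonneg fun i hi => hG0 i hi z))
          hH.abs (ae_of_all _ fun z => mul_le_of_le_one_right (abs_nonneg _) (hG1 z))

lemma setAverage_nonneg {f : α → ℝ} (hf : ∀ x, 0 ≤ f x) (C : Set α) :
    0 ≤ ⨍ x in C, f x ∂μ := by
  rw [setAverage_eq']
  exact integral_nonneg hf

lemma measurable_setAverage {γ : Type*} [MeasurableSpace γ] {ν : Measure γ} [SFinite ν]
    {f : α → γ → ℝ} (hf : Measurable (uncurry f)) (C : Set γ) :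
    Measurable fun x => ⨍ z in C, f x z ∂ν := by
  simp_rw [setAverage_eq]
  exact (hf.stronglyMeasurable.integral_prod_right' (ν := ν.restrict C)).measurable.const_smul
    (ν.real C)⁻¹

end MeasureTheory

namespace ProbabilityTheory

section Density

variable {α β γ : Type*} [MeasurableSpace α] [MeasurableSpace β] [MeasurableSpace γ]
  {ρ : Measure α} {ν : Measure γ} {κ : Kernel γ α} {p : α → γ → ℝ}

lemma Kernel.integrable_measureReal_apply [IsFiniteMeasure ν] (η : Kernel γ β) [IsMarkovKernel η]
    {B : Set β} (hB : MeasurableSet B) : Integrable (fun z => (η z).real B) ν :=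
  .of_bound (η.measurable_coe hB).ennreal_toReal.aestronglyMeasurable 1 <| ae_of_all _ fun z => by
    rw [Real.norm_of_nonneg measureReal_nonneg]; exact measureReal_le_one

variable [IsMarkovKernel κ]

lemma ae_integrable_and_setIntegral_eq_of_density (hp : Measurable (uncurry p))
    (hp0 : ∀ x z, 0 ≤ p x z)
    (hdens : ∀ᵐ z ∂ν, κ z = ρ.withDensity fun x => ENNReal.ofReal (p x z)) :
    ∀ᵐ z ∂ν, Integrable (fun x => p x z) ρ ∧
      ∀ A, MeasurableSet A → ∫ x in A, p x z ∂ρ = (κ z).real A := by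
  filter_upwards [hdens] with z hz
  have hpz : Measurable fun x => p x z := hp.comp (measurable_id.prodMk measurable_const)
  have hset : ∀ A, MeasurableSet A → ∫ x in A, p x z ∂ρ = (κ z).real A := fun A hA => by
    rw [integral_eq_lintegral_of_nonneg_ae (ae_of_all _ fun x => hp0 x z)
      hpz.aestronglyMeasurable, measureReal_def, hz, withDensity_apply _ hA]
  have hmass : ∫ x, p x z ∂ρ = 1 := by simpa using hset univ MeasurableSet.univ
  exact ⟨.of_integral_ne_zero (by rw [hmass]; exact one_ne_zero), hset⟩

lemma integrable_uncurry_of_density [SFinite ρ] [IsFiniteMeasure ν]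
    (hp : Measurable (uncurry p)) (hp0 : ∀ x z, 0 ≤ p x z)
    (hdens : ∀ᵐ z ∂ν, κ z = ρ.withDensity fun x => ENNReal.ofReal (p x z)) :
    Integrable (uncurry p) (ρ.prod ν) := by
  refine ⟨hp.aestronglyMeasurable, ?_⟩
  have hmass : ∀ᵐ z ∂ν, ∫⁻ x, ‖uncurry p (x, z)‖ₑ ∂ρ = 1 := by
    filter_upwards [hdens] with z hz
    simp_rw [uncurry_apply_pair, Real.enorm_of_nonneg (hp0 _ z)]
    rw [← setLIntegral_univ, ← withDensity_apply _ MeasurableSet.univ, ← hz, measure_univ]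
  rw [HasFiniteIntegral, lintegral_prod_symm' _ hp.enorm, lintegral_congr_ae hmass]
  simp

variable [SFinite ρ] [IsFiniteMeasure ν]

lemma setIntegral_setAverage_of_density (hp : Measurable (uncurry p)) (hp0 : ∀ x z, 0 ≤ p x z)
    (hdens : ∀ᵐ z ∂ν, κ z = ρ.withDensity fun x => ENNReal.ofReal (p x z))
    {A : Set α} (hA : MeasurableSet A) (C : Set γ) :
    ∫ x in A, ⨍ z in C, p x z ∂ν ∂ρ = ⨍ z in C, (κ z).real A ∂ν := by
  have hint : Integrable (uncurry p) ((ρ.restrict A).prod (ν.restrict C)) := by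
    rw [Measure.prod_restrict]
    exact (integrable_uncurry_of_density hp hp0 hdens).restrict
  simp_rw [setAverage_eq, integral_smul]
  rw [integral_integral_swap hint]
  congr 1
  refine integral_congr_ae (ae_restrict_of_ae ?_)
  filter_upwards [ae_integrable_and_setIntegral_eq_of_density hp hp0 hdens] with z hz
  exact hz.2 A hA

lemma integrable_setAverage_of_density (hp : Measurable (uncurry p)) (hp0 : ∀ x z, 0 ≤ p x z)
    (hdens : ∀ᵐ z ∂ν, κ z = ρ.withDensity fun x => ENNReal.ofReal (p x z)) (C : Set γ) :
    Integrable (fun x => ⨍ z in C, p x z ∂ν) ρ := by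
  have hint : Integrable (uncurry p) (ρ.prod (ν.restrict C)) := by
    rw [← Measure.restrict_univ (μ := ρ), Measure.prod_restrict]
    exact (integrable_uncurry_of_density hp hp0 hdens).restrict
  simp_rw [setAverage_eq]
  exact hint.integral_prod_left.smul (ν.real C)⁻¹

lemma integral_setAverage_of_density_le_one (hp : Measurable (uncurry p))
    (hp0 : ∀ x z, 0 ≤ p x z)
    (hdens : ∀ᵐ z ∂ν, κ z = ρ.withDensity fun x => ENNReal.ofReal (p x z)) (C : Set γ) :
    ∫ x, ⨍ z in C, p x z ∂ν ∂ρ ≤ 1 := by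
  rw [← setIntegral_univ, setIntegral_setAverage_of_density hp hp0 hdens MeasurableSet.univ]
  rcases eq_or_ne (ν.real C) 0 with hC | hC <;> simp [setAverage_eq, hC]

lemma integrable_integral_abs_sub_of_density (hp : Measurable (uncurry p))
    (hp0 : ∀ x z, 0 ≤ p x z)
    (hdens : ∀ᵐ z ∂ν, κ z = ρ.withDensity fun x => ENNReal.ofReal (p x z))
    {q : α → γ → ℝ} (hq : Measurable (uncurry q)) (hq0 : ∀ x z, 0 ≤ q x z)
    (hqi : ∀ z, Integrable (fun x => q x z) ρ) (hq1 : ∀ z, ∫ x, q x z ∂ρ ≤ 1) :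
    Integrable (fun z => ∫ x, |p x z - q x z| ∂ρ) ν := by
  refine .of_bound ((hp.sub hq).abs.stronglyMeasurable.integral_prod_left' (μ := ρ)
    ).aestronglyMeasurable 2 ?_
  filter_upwards [ae_integrable_and_setIntegral_eq_of_density hp hp0 hdens] with z ⟨hpi, hpA⟩
  have hmass : ∫ x, p x z ∂ρ = 1 := by simpa using hpA univ MeasurableSet.univ
  rw [Real.norm_of_nonneg (integral_nonneg fun _ => abs_nonneg _)]
  calc ∫ x, |p x z - q x z| ∂ρ ≤ ∫ x, (p x z + q x z) ∂ρ :=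
        integral_mono (hpi.sub (hqi z)).abs (hpi.add (hqi z)) fun x =>
          (abs_sub _ _).trans_eq (by rw [abs_of_nonneg (hp0 x z), abs_of_nonneg (hq0 x z)])
    _ = 1 + ∫ x, q x z ∂ρ := by rw [integral_add hpi (hqi z), hmass]
    _ ≤ 2 := by linarith [hq1 z]

lemma ae_abs_sub_setAverage_le_of_density (hp : Measurable (uncurry p))
    (hp0 : ∀ x z, 0 ≤ p x z)
    (hdens : ∀ᵐ z ∂ν, κ z = ρ.withDensity fun x => ENNReal.ofReal (p x z)) (C : Set γ) :
    ∀ᵐ z ∂ν, ∀ A, MeasurableSet A →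
      |(κ z).real A - ⨍ z' in C, (κ z').real A ∂ν|
        ≤ ∫ x in A, |p x z - ⨍ z' in C, p x z' ∂ν| ∂ρ := by
  filter_upwards [ae_integrable_and_setIntegral_eq_of_density hp hp0 hdens] with z ⟨hpi, hpA⟩ A hA
  rw [← hpA A hA, ← setIntegral_setAverage_of_density hp hp0 hdens hA C,
    ← integral_sub hpi.integrableOn (integrable_setAverage_of_density hp hp0 hdens C).integrableOn]
  exact abs_integral_le_integral_abs

theorem sum_sum_abs_setIntegral_le_of_density (hp : Measurable (uncurry p))
    (hp0 : ∀ x z, 0 ≤ p x z)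
    (hdens : ∀ᵐ z ∂ν, κ z = ρ.withDensity fun x => ENNReal.ofReal (p x z))
    (η : Kernel γ β) [IsMarkovKernel η] {ι ι' : Type*} (sA : Finset ι) (sB : Finset ι')
    {A : ι → Set α} (hA : ∀ a ∈ sA, MeasurableSet (A a)) (hAd : (sA : Set ι).PairwiseDisjoint A)
    {B : ι' → Set β} (hB : ∀ b ∈ sB, MeasurableSet (B b)) (hBd : (sB : Set ι').PairwiseDisjoint B)
    (C : Set γ) :
    ∑ a ∈ sA, ∑ b ∈ sB,
        |∫ z in C, ((κ z).real (A a) - ⨍ z' in C, (κ z').real (A a) ∂ν) * (η z).real (B b) ∂ν|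
      ≤ ∫ z in C, ∫ x, |p x z - ⨍ z' in C, p x z' ∂ν| ∂ρ ∂ν := by
  have hF : ∀ a ∈ sA, Integrable
      (fun z => (κ z).real (A a) - ⨍ z' in C, (κ z').real (A a) ∂ν) (ν.restrict C) :=
    fun a ha => (κ.integrable_measureReal_apply (hA a ha)).sub (integrable_const _)
  have hdev : Integrable (fun z => ∫ x, |p x z - ⨍ z' in C, p x z' ∂ν| ∂ρ) ν :=
    integrable_integral_abs_sub_of_density hp hp0 hdens
      ((measurable_setAverage hp C).comp measurable_fst)
      (fun x _ => setAverage_nonneg (hp0 x) C)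
      (fun _ => integrable_setAverage_of_density hp hp0 hdens C)
      (fun _ => integral_setAverage_of_density_le_one hp hp0 hdens C)
  calc _ ≤ ∑ a ∈ sA, ∫ z in C, |(κ z).real (A a) - ⨍ z' in C, (κ z').real (A a) ∂ν| ∂ν :=
        sum_le_sum fun a ha => sum_abs_integral_mul_le_integral_abs sB (hF a ha)
          (fun b hb => (η.measurable_coe (hB b hb)).ennreal_toReal.aestronglyMeasurable)
          (fun _ _ _ => measureReal_nonneg) fun _ => sum_measureReal_le_one sB hB hBd
    _ = ∫ z in C, ∑ a ∈ sA, |(κ z).real (A a) - ⨍ z' in C, (κ z').real (A a) ∂ν| ∂ν :=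
        (integral_finsetSum sA fun a ha => (hF a ha).abs).symm
    _ ≤ ∫ z in C, ∫ x, |p x z - ⨍ z' in C, p x z' ∂ν| ∂ρ ∂ν := by
        refine integral_mono_ae (integrable_finsetSum sA fun a ha => (hF a ha).abs)
          hdev.integrableOn (ae_restrict_of_ae ?_)
        filter_upwards [ae_abs_sub_setAverage_le_of_density hp hp0 hdens C,
          ae_integrable_and_setIntegral_eq_of_density hp hp0 hdens] with z hz hpz
        exact (sum_le_sum fun a ha => hz _ (hA a ha)).trans <|
          sum_setIntegral_le_integral
            (hpz.1.sub (integrable_setAverage_of_density hp hp0 hdens C)).abs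
            (ae_of_all _ fun _ => abs_nonneg _) sA hA hAd

end Density

section CondIndep

variable {Ω α β γ : Type*} [MeasurableSpace Ω] [MeasurableSpace α] [StandardBorelSpace α]
  [Nonempty α] [MeasurableSpace β] [StandardBorelSpace β] [Nonempty β] [mγ : MeasurableSpace γ]
  {μ : Measure Ω} [IsFiniteMeasure μ] {X : Ω → α} {Y : Ω → β} {Z : Ω → γ}

lemma setIntegral_preimage_condExp_indicator (hZ : Measurable Z) {S : Set Ω}
    (hS : MeasurableSet S) {C : Set γ} (hC : MeasurableSet C) :
    ∫ ω in Z ⁻¹' C, (μ⟦S | mγ.comap Z⟧) ω ∂μ = μ.real (S ∩ Z ⁻¹' C) := by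
  rw [setIntegral_condExp hZ.comap_le ((integrable_const 1).indicator hS) ⟨C, hC, rfl⟩,
    setIntegral_indicator hS, setIntegral_const, smul_eq_mul, mul_one, inter_comm]

lemma measureReal_inter_preimage_eq_setIntegral_condDistrib (hX : Measurable X)
    (hZ : Measurable Z) {A : Set α} (hA : MeasurableSet A) {C : Set γ} (hC : MeasurableSet C) :
    μ.real (X ⁻¹' A ∩ Z ⁻¹' C) = ∫ z in C, (condDistrib X Z μ z).real A ∂μ.map Z := by
  rw [← setIntegral_preimage_condExp_indicator hZ (hX hA) hC,
    setIntegral_map (f := fun z => (condDistrib X Z μ z).real A) hC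
      ((condDistrib X Z μ).measurable_coe hA).ennreal_toReal.aestronglyMeasurable hZ.aemeasurable]
  exact setIntegral_congr_ae (hZ hC) <|
    (condDistrib_ae_eq_condExp hZ hX hA).mono fun ω hω _ => hω.symm

lemma measureReal_inter_inter_preimage_eq_setIntegral_condDistrib (hX : Measurable X)
    (hY : Measurable Y) (hZ : Measurable Z) {A : Set α} (hA : MeasurableSet A) {B : Set β}
    (hB : MeasurableSet B) {C : Set γ} (hC : MeasurableSet C)
    (hCI : μ⟦X ⁻¹' A ∩ Y ⁻¹' B | mγ.comap Z⟧
      =ᵐ[μ] μ⟦X ⁻¹' A | mγ.comap Z⟧ * μ⟦Y ⁻¹' B | mγ.comap Z⟧) :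
    μ.real (X ⁻¹' A ∩ Y ⁻¹' B ∩ Z ⁻¹' C)
      = ∫ z in C, (condDistrib X Z μ z).real A * (condDistrib Y Z μ z).real B ∂μ.map Z := by
  rw [← setIntegral_preimage_condExp_indicator hZ ((hX hA).inter (hY hB)) hC,
    setIntegral_map (f := fun z => (condDistrib X Z μ z).real A * (condDistrib Y Z μ z).real B) hC
      (((condDistrib X Z μ).measurable_coe hA).ennreal_toReal.mul
        ((condDistrib Y Z μ).measurable_coe hB).ennreal_toReal).aestronglyMeasurable
      hZ.aemeasurable]
  refine setIntegral_congr_ae (hZ hC) ?_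
  filter_upwards [hCI, condDistrib_ae_eq_condExp hZ hX hA, condDistrib_ae_eq_condExp hZ hY hB]
    with ω hω hωA hωB _
  rw [hω, Pi.mul_apply, hωA, hωB]

lemma measureReal_inter_sub_div_eq_setIntegral_of_condIndep (hX : Measurable X)
    (hY : Measurable Y) (hZ : Measurable Z) {A : Set α} (hA : MeasurableSet A) {B : Set β}
    (hB : MeasurableSet B) {C : Set γ} (hC : MeasurableSet C)
    (hCI : μ⟦X ⁻¹' A ∩ Y ⁻¹' B | mγ.comap Z⟧
      =ᵐ[μ] μ⟦X ⁻¹' A | mγ.comap Z⟧ * μ⟦Y ⁻¹' B | mγ.comap Z⟧) :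
    μ.real (X ⁻¹' A ∩ Y ⁻¹' B ∩ Z ⁻¹' C)
        - μ.real (X ⁻¹' A ∩ Z ⁻¹' C) * μ.real (Y ⁻¹' B ∩ Z ⁻¹' C) / μ.real (Z ⁻¹' C)
      = ∫ z in C, ((condDistrib X Z μ z).real A
          - ⨍ z' in C, (condDistrib X Z μ z').real A ∂μ.map Z)
          * (condDistrib Y Z μ z).real B ∂μ.map Z := by
  have hκ := (condDistrib X Z μ).integrable_measureReal_apply (ν := μ.map Z) hA
  have hη := (condDistrib Y Z μ).integrable_measureReal_apply (ν := μ.map Z) hB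
  have hκη : Integrable (fun z => (condDistrib X Z μ z).real A * (condDistrib Y Z μ z).real B)
      (μ.map Z) := hκ.mul_bdd hη.aestronglyMeasurable <| ae_of_all _ fun z => by
    rw [Real.norm_of_nonneg measureReal_nonneg]; exact measureReal_le_one
  rw [setIntegral_sub_setAverage_mul hκη.integrableOn hη.integrableOn,
    measureReal_inter_inter_preimage_eq_setIntegral_condDistrib hX hY hZ hA hB hC hCI,
    measureReal_inter_preimage_eq_setIntegral_condDistrib hX hZ hA hC,
    measureReal_inter_preimage_eq_setIntegral_condDistrib hY hZ hB hC,
    map_measureReal_apply hZ hC]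

theorem sum_sum_abs_measureReal_sub_le_of_condIndep (hX : Measurable X) (hY : Measurable Y)
    (hZ : Measurable Z)
    (hCI : ∀ A, MeasurableSet A → ∀ B, MeasurableSet B →
      μ⟦X ⁻¹' A ∩ Y ⁻¹' B | mγ.comap Z⟧ =ᵐ[μ] μ⟦X ⁻¹' A | mγ.comap Z⟧ * μ⟦Y ⁻¹' B | mγ.comap Z⟧)
    {p : α → γ → ℝ} (hp : Measurable (uncurry p)) (hp0 : ∀ x z, 0 ≤ p x z)
    (hdens : ∀ᵐ z ∂μ.map Z,
      condDistrib X Z μ z = (μ.map X).withDensity fun x => ENNReal.ofReal (p x z))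
    {ι ι' : Type*} (sA : Finset ι) (sB : Finset ι')
    {A : ι → Set α} (hA : ∀ a ∈ sA, MeasurableSet (A a)) (hAd : (sA : Set ι).PairwiseDisjoint A)
    {B : ι' → Set β} (hB : ∀ b ∈ sB, MeasurableSet (B b)) (hBd : (sB : Set ι').PairwiseDisjoint B)
    {C : Set γ} (hC : MeasurableSet C) :
    ∑ a ∈ sA, ∑ b ∈ sB, |μ.real (X ⁻¹' A a ∩ Y ⁻¹' B b ∩ Z ⁻¹' C)
        - μ.real (X ⁻¹' A a ∩ Z ⁻¹' C) * μ.real (Y ⁻¹' B b ∩ Z ⁻¹' C) / μ.real (Z ⁻¹' C)|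
      ≤ ∫ z in C, ∫ x, |p x z - ⨍ z' in C, p x z' ∂μ.map Z| ∂μ.map X ∂μ.map Z :=
  Eq.trans_le
    (sum_congr rfl fun a ha => sum_congr rfl fun b hb => congrArg abs <|
      measureReal_inter_sub_div_eq_setIntegral_of_condIndep hX hY hZ (hA a ha) (hB b hb) hC
        (hCI _ (hA a ha) _ (hB b hb)))
    (sum_sum_abs_setIntegral_le_of_density hp hp0 hdens _ sA sB hA hAd hB hBd C)

end CondIndep

end ProbabilityTheory

lemma measurable_setAverage_cellOf {α : Type*} [MeasurableSpace α] {d' : ℕ}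
    {ν : Measure (Fin d' → ℝ)} [SFinite ν] {p : α → (Fin d' → ℝ) → ℝ}
    (hp : Measurable (uncurry p)) (h : ℝ) :
    Measurable (uncurry fun x z => ⨍ z' in cellOf d' h z, p x z' ∂ν) := by
  have hcell : Measurable fun w : α × (Fin d' → ℤ) => ⨍ z' in cellPi d' h w.2, p w.1 z' ∂ν :=
    measurable_from_prod_countable_left fun c => measurable_setAverage (ν := ν) hp (cellPi d' h c)
  have hfloor : Measurable fun z : Fin d' → ℝ => fun i => ⌊z i / h⌋ :=
    measurable_pi_lambda _ fun i => by fun_prop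
  exact (hcell.comp (measurable_fst.prodMk (hfloor.comp measurable_snd)) :)

lemma sum_setIntegral_cellPi_le_integral_cellOf {α : Type*} [MeasurableSpace α]
    {ρ : Measure α} [SFinite ρ] {d' : ℕ} {ν : Measure (Fin d' → ℝ)} [IsFiniteMeasure ν]
    {κ : Kernel (Fin d' → ℝ) α} [IsMarkovKernel κ] {p : α → (Fin d' → ℝ) → ℝ}
    (hp : Measurable (uncurry p)) (hp0 : ∀ x z, 0 ≤ p x z)
    (hdens : ∀ᵐ z ∂ν, κ z = ρ.withDensity fun x => ENNReal.ofReal (p x z))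
    {h : ℝ} (hh : 0 < h) (sC : Finset (Fin d' → ℤ)) :
    ∑ c ∈ sC, ∫ z in cellPi d' h c, ∫ x, |p x z - ⨍ z' in cellPi d' h c, p x z' ∂ν| ∂ρ ∂ν
      ≤ ∫ z, ∫ x, |p x z - ⨍ z' in cellOf d' h z, p x z' ∂ν| ∂ρ ∂ν := by
  have he : Integrable (fun z => ∫ x, |p x z - ⨍ z' in cellOf d' h z, p x z' ∂ν| ∂ρ) ν :=
    integrable_integral_abs_sub_of_density hp hp0 hdens (measurable_setAverage_cellOf hp h)
      (fun x z => setAverage_nonneg (hp0 x) _)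
      (fun z => integrable_setAverage_of_density hp hp0 hdens _)
      (fun z => integral_setAverage_of_density_le_one hp hp0 hdens _)
  calc _ = ∑ c ∈ sC, ∫ z in cellPi d' h c,
          ∫ x, |p x z - ⨍ z' in cellOf d' h z, p x z' ∂ν| ∂ρ ∂ν :=
        sum_congr rfl fun c _ => setIntegral_congr_fun (measurableSet_cellPi d' h c)
          fun z hz => by rw [cellOf_eq_of_mem_cellPi hh hz]
    _ ≤ _ := sum_setIntegral_le_integral he
        (ae_of_all _ fun z => integral_nonneg fun _ => abs_nonneg _) sC
        (fun c _ => measurableSet_cellPi d' h c) ((pairwise_disjoint_cellPi d' h).set_pairwise _)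

theorem null_hypothesis_partition_error_general {Ω : Type*} [MeasurableSpace Ω] {d d' : ℕ}
    (μ : Measure Ω) [IsProbabilityMeasure μ]
    (X : Ω → (Fin d → ℝ)) (Y : Ω → ℝ) (Z : Ω → (Fin d' → ℝ))
    (hX : Measurable X) (hY : Measurable Y) (hZ : Measurable Z)
    (h : ℝ) (hh : 0 < h) (Cstar : ℝ)
    -- the null hypothesis: `X` and `Y` are conditionally independent given `Z`
    (hCI : ∀ A : Set (Fin d → ℝ), MeasurableSet A → ∀ B : Set ℝ, MeasurableSet B →
      (μ[fun ω => A.indicator (fun _ => (1 : ℝ)) (X ω) *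
          B.indicator (fun _ => (1 : ℝ)) (Y ω) | MeasurableSpace.comap Z inferInstance])
        =ᵐ[μ]
      fun ω => (μ[fun ω' => A.indicator (fun _ => (1 : ℝ)) (X ω') |
          MeasurableSpace.comap Z inferInstance]) ω *
        (μ[fun ω' => B.indicator (fun _ => (1 : ℝ)) (Y ω') |
          MeasurableSpace.comap Z inferInstance]) ω)
    -- `p(·|z)` is the density of `P_{X|Z=z}` with respect to `P_X`
    (p : (Fin d → ℝ) → (Fin d' → ℝ) → ℝ)
    (hp : Measurable (Function.uncurry p)) (hpnonneg : ∀ x z, 0 ≤ p x z)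
    (hdens : ∀ᵐ z ∂(μ.map Z), condDistrib X Z μ z =
      (μ.map X).withDensity (fun x => ENNReal.ofReal (p x z)))
    -- Condition 1
    (hLip : (∫ z, ∫ x,
        |p x z - (∫ z' in cellOf d' h z, p x z' ∂(μ.map Z)) /
          ((μ.map Z) (cellOf d' h z)).toReal| ∂(μ.map X) ∂(μ.map Z)) ≤ Cstar * h) :
    ∑' k : (Fin d → ℤ) × ℤ × (Fin d' → ℤ),
      |(μ (X ⁻¹' cellPi d h k.1 ∩ Y ⁻¹' cell1 h k.2.1 ∩ Z ⁻¹' cellPi d' h k.2.2)).toReal -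
        (μ (X ⁻¹' cellPi d h k.1 ∩ Z ⁻¹' cellPi d' h k.2.2)).toReal *
          (μ (Y ⁻¹' cell1 h k.2.1 ∩ Z ⁻¹' cellPi d' h k.2.2)).toReal /
          (μ (Z ⁻¹' cellPi d' h k.2.2)).toReal| ≤ Cstar * h := by
  have hCI' : ∀ A, MeasurableSet A → ∀ B, MeasurableSet B →
      μ⟦X ⁻¹' A ∩ Y ⁻¹' B | MeasurableSpace.comap Z inferInstance⟧ =ᵐ[μ]
        μ⟦X ⁻¹' A | MeasurableSpace.comap Z inferInstance⟧ *
          μ⟦Y ⁻¹' B | MeasurableSpace.comap Z inferInstance⟧ := fun A hA B hB => by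
    rw [show ((X ⁻¹' A ∩ Y ⁻¹' B).indicator fun _ => (1 : ℝ)) = _ from Set.inter_indicator_one]
    exact hCI A hA B hB
  refine tsum_le_of_sum_sum_sum_le (fun _ => abs_nonneg _) fun sA sB sC => ?_
  calc _ ≤ ∑ c ∈ sC, ∫ z in cellPi d' h c,
          ∫ x, |p x z - ⨍ z' in cellPi d' h c, p x z' ∂μ.map Z| ∂μ.map X ∂μ.map Z :=
        sum_le_sum fun c _ => sum_sum_abs_measureReal_sub_le_of_condIndep hX hY hZ hCI' hp
          hpnonneg hdens sA sB (fun a _ => measurableSet_cellPi d h a)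
          ((pairwise_disjoint_cellPi d h).set_pairwise _) (fun b _ => measurableSet_Ico)
          ((pairwise_disjoint_cell1 h).set_pairwise _) (measurableSet_cellPi d' h c)
    _ ≤ ∫ z, ∫ x, |p x z - ⨍ z' in cellOf d' h z, p x z' ∂μ.map Z| ∂μ.map X ∂μ.map Z :=
        sum_setIntegral_cellPi_le_integral_cellOf hp hpnonneg hdens hh sC
    _ ≤ Cstar * h := by
        convert hLip using 6
        simp [setAverage_eq, div_eq_inv_mul, measureReal_def]

/-- Under the null hypothesis that `X` and `Y` are conditionally
independent given `Z`, and under Condition 1 (a Lipschitz-type condition on the density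
`p(·|z)` of `P_{X|Z=z}` w.r.t. `P_X`), the deterministic approximation error satisfies
`Σ_{A,B,C} |P_{XYZ}(A×B×C) − P_{XZ}(A×C) P_{YZ}(B×C) / P_Z(C)| ≤ C* h`. -/
theorem null_hypothesis_partition_error {Ω : Type*} [MeasurableSpace Ω] {d d' : ℕ}
    (μ : Measure Ω) [IsProbabilityMeasure μ]
    (X : Ω → (Fin d → ℝ)) (Y : Ω → ℝ) (Z : Ω → (Fin d' → ℝ))
    (hX : Measurable X) (hY : Measurable Y) (hZ : Measurable Z)
    (hXr : ∀ ω i, X ω i ∈ Set.Icc (0 : ℝ) 1) (hYr : ∀ ω, Y ω ∈ Set.Icc (0 : ℝ) 1)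
    (hZr : ∀ ω i, Z ω i ∈ Set.Icc (0 : ℝ) 1)
    (h : ℝ) (hh : 0 < h) (Cstar : ℝ)
    -- the null hypothesis: `X` and `Y` are conditionally independent given `Z`
    (hCI : ∀ A : Set (Fin d → ℝ), MeasurableSet A → ∀ B : Set ℝ, MeasurableSet B →
      (μ[fun ω => A.indicator (fun _ => (1 : ℝ)) (X ω) *
          B.indicator (fun _ => (1 : ℝ)) (Y ω) | MeasurableSpace.comap Z inferInstance])
        =ᵐ[μ]
      fun ω => (μ[fun ω' => A.indicator (fun _ => (1 : ℝ)) (X ω') |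
          MeasurableSpace.comap Z inferInstance]) ω *
        (μ[fun ω' => B.indicator (fun _ => (1 : ℝ)) (Y ω') |
          MeasurableSpace.comap Z inferInstance]) ω)
    -- `p(·|z)` is the density of `P_{X|Z=z}` with respect to `P_X`
    (p : (Fin d → ℝ) → (Fin d' → ℝ) → ℝ)
    (hp : Measurable (Function.uncurry p)) (hpnonneg : ∀ x z, 0 ≤ p x z)
    (hdens : ∀ᵐ z ∂(μ.map Z), condDistrib X Z μ z =
      (μ.map X).withDensity (fun x => ENNReal.ofReal (p x z)))
    -- Condition 1
    (hLip : (∫ z, ∫ x,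
        |p x z - (∫ z' in cellOf d' h z, p x z' ∂(μ.map Z)) /
          ((μ.map Z) (cellOf d' h z)).toReal| ∂(μ.map X) ∂(μ.map Z)) ≤ Cstar * h) :
    ∑' k : (Fin d → ℤ) × ℤ × (Fin d' → ℤ),
      |(μ (X ⁻¹' cellPi d h k.1 ∩ Y ⁻¹' cell1 h k.2.1 ∩ Z ⁻¹' cellPi d' h k.2.2)).toReal -
        (μ (X ⁻¹' cellPi d h k.1 ∩ Z ⁻¹' cellPi d' h k.2.2)).toReal *
          (μ (Y ⁻¹' cell1 h k.2.1 ∩ Z ⁻¹' cellPi d' h k.2.2)).toReal /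
          (μ (Z ⁻¹' cellPi d' h k.2.2)).toReal| ≤ Cstar * h :=
  null_hypothesis_partition_error_general μ X Y Z hX hY hZ h hh Cstar hCI p hp hpnonneg hdens hLip
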